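/- Let F be a finite field with q = |F| elements and K a finite field extension of F. Let f ∈ K[X] be a nonzero linearized polynomial all of whose coefficients lie in the image of F in K, and let g, Q, R ∈ K[X] be linearized polynomials with g = Q ∘ f + R and deg R < deg f (so R is the right remainder of g by f). Then every coefficient of R lies in the F-span of the coefficients of g; that is, supp(R) ⊆ supp(g). -/

import Mathlib

/-!
Let `V` be the `F`-span of the coefficients of `g`. As `f` has coefficients in `F`, so do its
powers, so composing on the right with `f` preserves having coefficients in `V`; since
`R = g - Q ∘ f`, it suffices to put the coefficients of `Q` in `V`. Induct on the number of terms
of `Q`. Being linearized, `Q` has no constant term, so its leading term has degree `j ≥ 1`. Then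
`j · deg f > deg R`, so the coefficient of `g` in degree `j · deg f` is `lc(Q) · lc(f) ^ j`, and
`lc(f)` is a nonzero element of `F`; hence `lc(Q) ∈ V`. Finally
`g - lc(Q) · f ^ j = (Q - lc(Q) · X ^ j) ∘ f + R` again has coefficients in `V`.
-/

open Polynomial

/-- A polynomial over `K` is linearized (a `q`-polynomial) if every exponent in
its support is a power of `q`. -/
def IsLinearized (q : ℕ) {K : Type*} [Semiring K] (p : K[X]) : Prop :=
  ∀ n ∈ p.support, ∃ i : ℕ, n = q ^ i

theorem IsLinearized.coeff_zero {q : ℕ} {K : Type*} [Semiring K] {p : K[X]} (hq : q ≠ 0)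
    (hp : IsLinearized q p) : p.coeff 0 = 0 := by
  by_contra h
  obtain ⟨i, hi⟩ := hp 0 (mem_support_iff.mpr h)
  exact pow_ne_zero i hq hi.symm

namespace Polynomial

theorem natDegree_pos_of_coeff_zero_eq_zero {K : Type*} [Semiring K] {p : K[X]} (hp : p ≠ 0)
    (h0 : p.coeff 0 = 0) : 0 < p.natDegree :=
  Nat.pos_of_ne_zero fun h => hp <| by rw [eq_C_of_natDegree_eq_zero h, h0, C_0]

section Lifts

variable {F K : Type*} [CommSemiring F] [CommSemiring K] [Algebra F K] {V : Submodule F K}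

theorem coeff_C_mul_mem_of_lifts {a : K} (ha : a ∈ V) {p : K[X]}
    (hp : p ∈ lifts (algebraMap F K)) (n : ℕ) : (C a * p).coeff n ∈ V := by
  obtain ⟨c, hc⟩ := (lifts_iff_coeff_lifts p).1 hp n
  rw [coeff_C_mul, ← hc, mul_comm, ← Algebra.smul_def]
  exact V.smul_mem c ha

theorem coeff_comp_mem_of_lifts {Q f : K[X]} (hQ : ∀ n, Q.coeff n ∈ V)
    (hf : f ∈ lifts (algebraMap F K)) (n : ℕ) : (Q.comp f).coeff n ∈ V := by
  rw [comp_eq_sum_left, sum_def, finsetSum_coeff]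
  exact V.sum_mem fun e _ => coeff_C_mul_mem_of_lifts (hQ e) (pow_mem hf e) n

end Lifts

section RightRemainder

variable {F K : Type*} [Field F] [CommRing K] [Algebra F K] {V : Submodule F K}
  {f R : K[X]}

theorem leadingCoeff_mem_of_coeff_comp_add_mem {Q : K[X]} (hf : f ∈ lifts (algebraMap F K))
    (hf0 : 0 < f.natDegree) (hQ0 : 0 < Q.natDegree) (hR : R.degree < f.degree)
    (hQR : ∀ n, (Q.comp f + R).coeff n ∈ V) : Q.leadingCoeff ∈ V := by
  obtain ⟨b, hb⟩ := (lifts_iff_coeff_lifts f).1 hf f.natDegree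
  have hb0 : b ≠ 0 := fun h => leadingCoeff_ne_zero.2 (ne_zero_of_natDegree_gt hf0) <| by
    rw [leadingCoeff, ← hb, h, map_zero]
  have hR0 : R.coeff (Q.natDegree * f.natDegree) = 0 := by
    refine coeff_eq_zero_of_degree_lt (hR.trans_le ?_)
    rw [degree_eq_natDegree (ne_zero_of_natDegree_gt hf0)]
    exact_mod_cast Nat.le_mul_of_pos_left _ hQ0
  have hcoeff : (Q.comp f + R).coeff (Q.natDegree * f.natDegree) =
      algebraMap F K (b ^ Q.natDegree) * Q.leadingCoeff := by
    rw [coeff_add, coeff_comp_degree_mul_degree hf0.ne', hR0, add_zero, map_pow, hb]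
    exact mul_comm _ _
  have := V.smul_mem (b ^ Q.natDegree)⁻¹ (hQR (Q.natDegree * f.natDegree))
  rwa [hcoeff, Algebra.smul_def, ← mul_assoc, ← map_mul, inv_mul_cancel₀ (pow_ne_zero _ hb0),
    map_one, one_mul] at this

theorem coeff_mem_of_coeff_comp_add_mem {Q : K[X]} (hf : f ∈ lifts (algebraMap F K))
    (hf0 : 0 < f.natDegree) (hQ0 : Q.coeff 0 = 0) (hR : R.degree < f.degree)
    (hQR : ∀ n, (Q.comp f + R).coeff n ∈ V) (n : ℕ) : Q.coeff n ∈ V := by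
  by_cases hQ : Q = 0
  · simp [hQ]
  have hdeg : 0 < Q.natDegree := natDegree_pos_of_coeff_zero_eq_zero hQ hQ0
  have hlead := leadingCoeff_mem_of_coeff_comp_add_mem hf hf0 hdeg hR hQR
  have htail : ∀ n, (Q.eraseLead.comp f + R).coeff n ∈ V := by
    intro n
    have hsplit : Q.comp f = Q.eraseLead.comp f + C Q.leadingCoeff * f ^ Q.natDegree := by
      conv_lhs => rw [← Q.eraseLead_add_C_mul_X_pow]
      rw [add_comp, mul_comp, C_comp, X_pow_comp]
    rw [hsplit, add_right_comm] at hQR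
    rw [← add_sub_cancel_right (Q.eraseLead.comp f + R) (C Q.leadingCoeff * f ^ Q.natDegree),
      coeff_sub]
    exact V.sub_mem (hQR n) (coeff_C_mul_mem_of_lifts hlead (pow_mem hf _) n)
  have hQ0' : Q.eraseLead.coeff 0 = 0 := by rw [eraseLead_coeff_of_ne 0 hdeg.ne, hQ0]
  have ih := coeff_mem_of_coeff_comp_add_mem (Q := Q.eraseLead) hf hf0 hQ0' hR htail
  rw [← Q.eraseLead_add_C_mul_X_pow, coeff_add, coeff_C_mul_X_pow]
  split_ifs
  · exact V.add_mem (ih n) hlead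
  · simpa using ih n
termination_by Q.support.card
decreasing_by exact eraseLead_support_card_lt hQ

end RightRemainder

end Polynomial

theorem supp_right_remainder_subset (F K : Type*) [Field F] [Fintype F]
    [Field K] [Algebra F K]
    (q : ℕ) (hq : q = Fintype.card F)
    (f g Q R : K[X])
    (hf : IsLinearized q f) (hf0 : f ≠ 0)
    (hfF : ∀ n, f.coeff n ∈ Set.range (algebraMap F K))
    (hQ : IsLinearized q Q)
    (hdiv : g = Q.comp f + R) (hdeg : R.degree < f.degree) :
    ∀ n, R.coeff n ∈ Submodule.span F (Set.range g.coeff) := by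
  have hq0 : q ≠ 0 := hq ▸ Fintype.card_ne_zero
  have hflift : f ∈ lifts (algebraMap F K) := (lifts_iff_coeff_lifts f).2 hfF
  have hgV (n : ℕ) : g.coeff n ∈ Submodule.span F (Set.range g.coeff) :=
    Submodule.subset_span ⟨n, rfl⟩
  have hf1 : 0 < f.natDegree := natDegree_pos_of_coeff_zero_eq_zero hf0 (hf.coeff_zero hq0)
  have hQV := coeff_mem_of_coeff_comp_add_mem hflift hf1 (hQ.coeff_zero hq0) hdeg
    (by rwa [← hdiv])
  intro n
  rw [eq_sub_of_add_eq' hdiv.symm, coeff_sub]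
  exact sub_mem (hgV n) (coeff_comp_mem_of_lifts hQV hflift n)
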